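/- arXiv:1103.4579 — 5 statements merged into one kernel-verified Lean document; each statement's English description precedes it below -/
import Mathlib

section
/- Let d be a squarefree negative integer with d ≠ -1 and d ≠ -3. If A is a cyclotomic R-matrix over O_{ℚ(√d)}, then for all indices i, j one has |A_{ij}·A_{ji}| ≤ 4; equivalently, every diagonal entry satisfies |A_{ii}| ≤ 2 and every off-diagonal entry satisfies |A_{ij}|² ≤ 4. -/
open Polynomial

/-- For squarefree `d < 0`, a generator over `ℤ` of the ring of integers of `ℚ(√d)`,
viewed inside `ℂ`: it is `(1+√d)/2` if `d ≡ 1 (mod 4)` and `√d` otherwise,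
where `√d = i·√(-d)`. -/
noncomputable def quadOmega (d : ℤ) : ℂ :=
  if d % 4 = 1 then (1 + Complex.I * Real.sqrt (-d)) / 2 else Complex.I * Real.sqrt (-d)

/-- Membership in the ring of integers `O_{ℚ(√d)} ⊆ ℂ`. -/
def InIntRing (d : ℤ) (x : ℂ) : Prop :=
  ∃ a b : ℤ, x = (a : ℂ) + (b : ℂ) * quadOmega d

/-- A matrix is cyclotomic if all of its eigenvalues are real and lie in `[-2, 2]`. -/
def IsCycloMat {n : ℕ} (A : Matrix (Fin n) (Fin n) ℂ) : Prop :=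
  ∀ μ ∈ spectrum ℂ A, ∃ t : ℝ, μ = (t : ℂ) ∧ -2 ≤ t ∧ t ≤ 2

/-- The Mahler measure of a complex polynomial: the product of `max 1 |α|`
over its roots `α`, with multiplicity. -/
noncomputable def mahlerMeasurePoly (P : Polynomial ℂ) : ℝ :=
  (P.roots.map fun z => max 1 ‖z‖).prod

/-- The associated reciprocal polynomial `z^n · g(z + 1/z)` of a polynomial `g`
of degree `n`, using `z^n (z+1/z)^k = z^(n-k) (z²+1)^k`. -/
noncomputable def assocRecip (n : ℕ) (g : Polynomial ℂ) : Polynomial ℂ :=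
  ∑ k ∈ Finset.range (n + 1), Polynomial.C (g.coeff k) * X ^ (n - k) * (X ^ 2 + 1) ^ k

/-- The Mahler measure of an `n × n` matrix: the Mahler measure of the associated
reciprocal polynomial of its characteristic polynomial. -/
noncomputable def mahlerMat {n : ℕ} (A : Matrix (Fin n) (Fin n) ℂ) : ℝ :=
  mahlerMeasurePoly (assocRecip n A.charpoly)

/-- Lehmer's polynomial `z^10 + z^9 - z^7 - z^6 - z^5 - z^4 - z^3 + z + 1`. -/
noncomputable def lehmerPolyC : Polynomial ℂ :=
  X ^ 10 + X ^ 9 - X ^ 7 - X ^ 6 - X ^ 5 - X ^ 4 - X ^ 3 + X + 1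

/-- Lehmer's number `λ₀ = 1.17628...`, the Mahler measure of Lehmer's polynomial. -/
noncomputable def lehmerNumber : ℝ := mahlerMeasurePoly lehmerPolyC

/-- A Hermitian matrix is indecomposable if the graph on its index set with an edge
between `i ≠ j` whenever `A i j ≠ 0` is connected. -/
def Indecomposable {n : ℕ} (A : Matrix (Fin n) (Fin n) ℂ) : Prop :=
  (SimpleGraph.fromRel fun i j => A i j ≠ 0).Connected

/-- `A` is minimal noncyclotomic if it is indecomposable and noncyclotomic while every
proper principal submatrix of `A` is cyclotomic. -/
def MinimalNoncyclotomic {n : ℕ} (A : Matrix (Fin n) (Fin n) ℂ) : Prop :=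
  Indecomposable A ∧ ¬ IsCycloMat A ∧
    ∀ (m : ℕ), m < n → ∀ e : Fin m ↪ Fin n, IsCycloMat (A.submatrix e e)

/-- An `L'`-matrix over `O_{ℚ(√d)}`: a Hermitian matrix with entries in the ring of
integers, diagonal entries in `{0, 1, -1}`, and off-diagonal entries of norm at most 2. -/
def IsLpMat (d : ℤ) {n : ℕ} (A : Matrix (Fin n) (Fin n) ℂ) : Prop :=
  A.IsHermitian ∧ (∀ i j, InIntRing d (A i j)) ∧
    (∀ i, A i i ∈ ({0, 1, -1} : Set ℂ)) ∧
    ∀ i j, i ≠ j → Complex.normSq (A i j) ≤ 2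

/-- An `L`-matrix over `O_{ℚ(√d)}`: a Hermitian matrix with entries in the ring of
integers, diagonal entries in `{0, 1, -1}`, and off-diagonal entries of norm at most 4. -/
def IsLMat (d : ℤ) {n : ℕ} (A : Matrix (Fin n) (Fin n) ℂ) : Prop :=
  A.IsHermitian ∧ (∀ i j, InIntRing d (A i j)) ∧
    (∀ i, A i i ∈ ({0, 1, -1} : Set ℂ)) ∧
    ∀ i j, i ≠ j → Complex.normSq (A i j) ≤ 4

/-! A Hermitian matrix is self-adjoint in the C⋆-algebra of matrices with the `L²` operator norm,
so its norm equals its spectral radius, which is at most 2 for a cyclotomic matrix. Each entry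
`A i j` is a coordinate of `A eⱼ` and is therefore bounded by that norm. -/

open scoped NNReal Matrix.Norms.L2Operator

namespace Matrix

lemma norm_apply_le_l2_opNorm {𝕜 m n : Type*} [RCLike 𝕜] [Fintype m] [Fintype n]
    [DecidableEq n] (A : Matrix m n 𝕜) (i : m) (j : n) : ‖A i j‖ ≤ ‖A‖ := by
  set x := EuclideanSpace.single j (1 : 𝕜)
  calc ‖A i j‖ = ‖((EuclideanSpace.equiv m 𝕜).symm (A *ᵥ x.ofLp)).ofLp i‖ := by
        simp [x]
    _ ≤ ‖(EuclideanSpace.equiv m 𝕜).symm (A *ᵥ x.ofLp)‖ := PiLp.norm_apply_le _ i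
    _ ≤ ‖A‖ * ‖x‖ := A.l2_opNorm_mulVec x
    _ = ‖A‖ := by simp [x]

lemma IsHermitian.l2_opNorm_le_of_spectrum {n : Type*} [Fintype n] [DecidableEq n]
    {A : Matrix n n ℂ} (hA : A.IsHermitian) {r : ℝ≥0}
    (h : ∀ μ ∈ spectrum ℂ A, ‖μ‖₊ ≤ r) : ‖A‖ ≤ r := by
  have : spectralRadius ℂ A ≤ r := iSup₂_le fun μ hμ => ENNReal.coe_le_coe.2 (h μ hμ)
  rw [hA.isSelfAdjoint.spectralRadius_eq_nnnorm, ENNReal.coe_le_coe] at this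
  exact this

end Matrix

lemma IsCycloMat.nnnorm_le_two_of_mem_spectrum {n : ℕ} {A : Matrix (Fin n) (Fin n) ℂ}
    (hcyc : IsCycloMat A) : ∀ μ ∈ spectrum ℂ A, ‖μ‖₊ ≤ 2 := by
  intro μ hμ
  obtain ⟨t, rfl, ht₁, ht₂⟩ := hcyc μ hμ
  rw [← NNReal.coe_le_coe, coe_nnnorm, Complex.norm_real, Real.norm_eq_abs]
  exact abs_le.2 ⟨ht₁, ht₂⟩

lemma IsCycloMat.norm_apply_le_two {n : ℕ} {A : Matrix (Fin n) (Fin n) ℂ} (hA : A.IsHermitian)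
    (hcyc : IsCycloMat A) (i j : Fin n) : ‖A i j‖ ≤ 2 :=
  (A.norm_apply_le_l2_opNorm i j).trans
    (hA.l2_opNorm_le_of_spectrum hcyc.nnnorm_le_two_of_mem_spectrum)

theorem cyclotomic_entry_bound_general
    (n : ℕ) (A : Matrix (Fin n) (Fin n) ℂ) (hA : A.IsHermitian)
    (hcyc : IsCycloMat A) :
    (∀ i j, ‖A i j * A j i‖ ≤ 4) ∧
      (∀ i, ‖A i i‖ ≤ 2) ∧
      (∀ i j, i ≠ j → Complex.normSq (A i j) ≤ 4) := by
  have hle := hcyc.norm_apply_le_two hA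
  refine ⟨fun i j => ?_, fun i => hle i i, fun i j _ => ?_⟩
  · calc ‖A i j * A j i‖ = ‖A i j‖ * ‖A j i‖ := norm_mul _ _
      _ ≤ 2 * 2 := mul_le_mul (hle i j) (hle j i) (norm_nonneg _) zero_le_two
      _ = 4 := by norm_num
  · calc Complex.normSq (A i j) = ‖A i j‖ ^ 2 := Complex.normSq_eq_norm_sq _
      _ ≤ 2 ^ 2 := pow_le_pow_left₀ (norm_nonneg _) (hle i j) 2
      _ = 4 := by norm_num

/-- Entries of a cyclotomic `R`-matrix satisfy `|A_{ij} A_{ji}| ≤ 4`; equivalently,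
diagonal entries have modulus at most 2 and off-diagonal entries have norm at most 4. -/
theorem cyclotomic_entry_bound
    (d : ℤ) (hd : d < 0) (hsf : Squarefree d) (hd1 : d ≠ -1) (hd3 : d ≠ -3)
    (n : ℕ) (A : Matrix (Fin n) (Fin n) ℂ) (hA : A.IsHermitian)
    (hent : ∀ i j, InIntRing d (A i j)) (hcyc : IsCycloMat A) :
    (∀ i j, ‖A i j * A j i‖ ≤ 4) ∧
      (∀ i, ‖A i i‖ ≤ 2) ∧
      (∀ i j, i ≠ j → Complex.normSq (A i j) ≤ 4) :=
  cyclotomic_entry_bound_general n A hA hcyc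
end

section
/- Let d be a squarefree negative integer with d ≠ -1 and d ≠ -3. If A is an indecomposable cyclotomic R-matrix over O_{ℚ(√d)}, then every diagonal entry of A lies in {0, 1, −1}, unless A is the 1×1 matrix (2) or the 1×1 matrix (−2). -/
open Polynomial

/-!
The diagonal entries of a Hermitian matrix are real, and the only real elements of
`O_{ℚ(√d)}` are rational integers. A cyclotomic Hermitian `A` satisfies `-2 ≤ A ≤ 2` in the
Loewner order, so each diagonal entry is an integer `a` with `|a| ≤ 2`. If `a = ±2`, then
`2 ∓ A` is positive semidefinite with a zero diagonal entry, so its whole column vanishes.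
That vertex is then isolated in the graph of `A`, and indecomposability forces `n = 1`.
-/

open Matrix
open scoped ComplexOrder MatrixOrder

lemma quadOmega_im_pos {d : ℤ} (hd : d < 0) : 0 < (quadOmega d).im := by
  have hsqrt : 0 < Real.sqrt (-d) := Real.sqrt_pos.mpr (by exact_mod_cast neg_pos.mpr hd)
  unfold quadOmega
  split <;> simp [hsqrt]

lemma InIntRing.exists_eq_intCast_of_conj_eq {d : ℤ} (hd : d < 0) {x : ℂ} (hx : InIntRing d x)
    (hconj : starRingEnd ℂ x = x) : ∃ a : ℤ, x = a := by
  obtain ⟨a, b, rfl⟩ := hx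
  have him : (b : ℝ) * (quadOmega d).im = 0 := by
    simpa using Complex.conj_eq_iff_im.mp hconj
  have hb : b = 0 := by
    exact_mod_cast (mul_eq_zero.mp him).resolve_right (quadOmega_im_pos hd).ne'
  exact ⟨a, by simp [hb]⟩

namespace Matrix

variable {ι 𝕜 : Type*} [Fintype ι] [DecidableEq ι] [RCLike 𝕜] {A : Matrix ι ι 𝕜}
  {r : ℝ}

lemma PosSemidef.apply_eq_zero_of_diag_eq_zero (hA : A.PosSemidef) {i : ι} (hii : A i i = 0)
    (j : ι) : A j i = 0 := by
  have h := (hA.dotProduct_mulVec_zero_iff (Pi.single i 1)).mp (by simp [hii])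
  simpa using congrFun h j

lemma diag_le_of_le_algebraMap (h : A ≤ algebraMap ℝ _ r) (i : ι) : A i i ≤ r := by
  have := (le_iff.mp h).diag_nonneg (i := i)
  simpa [algebraMap_matrix_apply, sub_nonneg] using this

lemma apply_eq_zero_of_le_algebraMap_of_diag_eq (h : A ≤ algebraMap ℝ _ r) {i : ι}
    (hii : A i i = r) {j : ι} (hji : j ≠ i) : A j i = 0 := by
  have := (le_iff.mp h).apply_eq_zero_of_diag_eq_zero (i := i)
    (by simp [algebraMap_matrix_apply, hii]) j
  simpa [algebraMap_matrix_apply, hji] using this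

lemma le_diag_of_algebraMap_le (h : algebraMap ℝ _ r ≤ A) (i : ι) : (r : 𝕜) ≤ A i i := by
  have := diag_le_of_le_algebraMap (A := -A) (r := -r) (by simpa using neg_le_neg h) i
  simpa using neg_le_neg this

lemma apply_eq_zero_of_algebraMap_le_of_diag_eq (h : algebraMap ℝ _ r ≤ A) {i : ι}
    (hii : A i i = r) {j : ι} (hji : j ≠ i) : A j i = 0 := by
  have := apply_eq_zero_of_le_algebraMap_of_diag_eq (A := -A) (r := -r)
    (by simpa using neg_le_neg h) (by simp [hii]) hji
  simpa using this

end Matrix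

section

variable {n : ℕ} {A : Matrix (Fin n) (Fin n) ℂ}

lemma IsCycloMat.mem_Icc_of_mem_spectrum (hcyc : IsCycloMat A) {x : ℝ}
    (hx : x ∈ spectrum ℝ A) : x ∈ Set.Icc (-2) 2 := by
  obtain ⟨t, ht, ht₁, ht₂⟩ := hcyc _ ((spectrum.algebraMap_mem_iff ℂ).mpr hx)
  obtain rfl : x = t := Complex.ofReal_injective ht
  exact ⟨ht₁, ht₂⟩

lemma IsCycloMat.le_algebraMap_two (hcyc : IsCycloMat A) (hA : A.IsHermitian) :
    A ≤ algebraMap ℝ _ 2 :=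
  le_algebraMap_of_spectrum_le (fun _ hx => (hcyc.mem_Icc_of_mem_spectrum hx).2) hA.isSelfAdjoint

lemma IsCycloMat.algebraMap_neg_two_le (hcyc : IsCycloMat A) (hA : A.IsHermitian) :
    algebraMap ℝ _ (-2) ≤ A :=
  algebraMap_le_of_le_spectrum (fun _ hx => (hcyc.mem_Icc_of_mem_spectrum hx).1) hA.isSelfAdjoint

lemma IsCycloMat.mem_Icc_of_diag_eq_intCast (hcyc : IsCycloMat A) (hA : A.IsHermitian) {i : Fin n}
    {a : ℤ} (ha : A i i = a) : a ∈ Set.Icc (-2) 2 := by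
  have h₁ : (a : ℝ) ≤ 2 := RCLike.ofReal_le_ofReal.mp <| by
    convert diag_le_of_le_algebraMap (hcyc.le_algebraMap_two hA) i using 1; simp [ha]
  have h₂ : -2 ≤ (a : ℝ) := RCLike.ofReal_le_ofReal.mp <| by
    convert le_diag_of_algebraMap_le (hcyc.algebraMap_neg_two_le hA) i using 1; simp [ha]
  exact ⟨by exact_mod_cast h₂, by exact_mod_cast h₁⟩

lemma Indecomposable.eq_one_of_col_eq_zero (hind : Indecomposable A) (hA : A.IsHermitian)
    {i : Fin n} (hcol : ∀ j, j ≠ i → A j i = 0) : n = 1 := by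
  have : Subsingleton (Fin n) := by
    by_contra hnt
    rw [not_subsingleton_iff_nontrivial] at hnt
    obtain ⟨j, hne, hij⟩ := hind.preconnected.exists_adj_of_nontrivial i
    have hji : A j i = 0 := hcol j (Ne.symm hne)
    exact hij.elim (· (by rw [← hA.apply, hji, star_zero])) (· hji)
  exact le_antisymm (Fin.subsingleton_iff_le_one.mp this) i.pos

end

theorem cyclotomic_diagonal_entries_general
    (d : ℤ) (hd : d < 0)
    (n : ℕ) (A : Matrix (Fin n) (Fin n) ℂ) (hA : A.IsHermitian)
    (hent : ∀ i j, InIntRing d (A i j)) (hind : Indecomposable A)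
    (hcyc : IsCycloMat A) :
    (∀ i, A i i ∈ ({0, 1, -1} : Set ℂ)) ∨
      (n = 1 ∧ ((∀ i j, A i j = 2) ∨ (∀ i j, A i j = -2))) := by
  by_cases hall : ∀ i, A i i ∈ ({0, 1, -1} : Set ℂ)
  · exact Or.inl hall
  obtain ⟨i, hi⟩ := not_forall.mp hall
  obtain ⟨a, ha⟩ := (hent i i).exists_eq_intCast_of_conj_eq hd (hA.apply i i)
  have ha₂ : a = 2 ∨ a = -2 := by
    obtain ⟨h₁, h₂⟩ := hcyc.mem_Icc_of_diag_eq_intCast hA ha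
    simp only [ha, Set.mem_insert_iff, Set.mem_singleton_iff] at hi
    norm_cast at hi
    omega
  have hcol : ∀ j, j ≠ i → A j i = 0 := by
    rcases ha₂ with rfl | rfl
    · exact fun j => apply_eq_zero_of_le_algebraMap_of_diag_eq (hcyc.le_algebraMap_two hA)
        (by simp [ha])
    · exact fun j => apply_eq_zero_of_algebraMap_le_of_diag_eq (hcyc.algebraMap_neg_two_le hA)
        (by simp [ha])
  obtain rfl := hind.eq_one_of_col_eq_zero hA hcol
  have hconst : ∀ j k : Fin 1, A j k = a := fun j k => by
    rw [Subsingleton.elim j i, Subsingleton.elim k i, ha]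
  rcases ha₂ with rfl | rfl
  · exact Or.inr ⟨rfl, Or.inl fun j k => by simp [hconst]⟩
  · exact Or.inr ⟨rfl, Or.inr fun j k => by simp [hconst]⟩

/-- Diagonal entries of an indecomposable cyclotomic `R`-matrix lie in `{0, 1, -1}`,
unless the matrix is the `1 × 1` matrix `(2)` or `(-2)`. -/
theorem cyclotomic_diagonal_entries
    (d : ℤ) (hd : d < 0) (hsf : Squarefree d) (hd1 : d ≠ -1) (hd3 : d ≠ -3)
    (n : ℕ) (A : Matrix (Fin n) (Fin n) ℂ) (hA : A.IsHermitian)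
    (hent : ∀ i j, InIntRing d (A i j)) (hind : Indecomposable A)
    (hcyc : IsCycloMat A) :
    (∀ i, A i i ∈ ({0, 1, -1} : Set ℂ)) ∨
      (n = 1 ∧ ((∀ i j, A i j = 2) ∨ (∀ i j, A i j = -2))) :=
  cyclotomic_diagonal_entries_general d hd n A hA hent hind hcyc
end

section
/- Let d be a squarefree negative integer with d ≠ -1 and d ≠ -3. If A is a cyclotomic R-matrix over O_{ℚ(√d)}, then for every index i one has Σ_j |A_{ij}|² ≤ 4, where the sum is over all indices j (including j = i); in graph language, every vertex of a cyclotomic L-graph has weighted degree at most 4. -/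
/-! For a Hermitian matrix the `ℓ²` operator norm equals the spectral radius (the C⋆-identity),
which is at most `2` when `A` is cyclotomic. Up to conjugation, row `i` of `A` is the column
`Aᴴ eᵢ`, so its squared Euclidean length `∑ⱼ |A_{ij}|²` is at most `‖Aᴴ‖² = ‖A‖² ≤ 4`. -/

open Polynomial

namespace Matrix

open scoped Matrix.Norms.L2Operator

variable {𝕜 m n : Type*} [RCLike 𝕜] [Fintype m] [Fintype n]

theorem sum_norm_sq_col_le_l2_opNorm_sq [DecidableEq n] (A : Matrix m n 𝕜) (j : n) :
    ∑ i, ‖A i j‖ ^ 2 ≤ ‖A‖ ^ 2 := by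
  have h := A.l2_opNorm_mulVec (EuclideanSpace.single j 1)
  rw [PiLp.norm_single, norm_one, mul_one] at h
  calc ∑ i, ‖A i j‖ ^ 2 = ‖(EuclideanSpace.equiv m 𝕜).symm (A *ᵥ Pi.single j 1)‖ ^ 2 := by
        simp [EuclideanSpace.norm_sq_eq]
    _ ≤ ‖A‖ ^ 2 := by gcongr; simpa using h

theorem sum_norm_sq_row_le_l2_opNorm_sq [DecidableEq m] [DecidableEq n] (A : Matrix m n 𝕜)
    (i : m) : ∑ j, ‖A i j‖ ^ 2 ≤ ‖A‖ ^ 2 := by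
  simpa [A.l2_opNorm_conjTranspose] using Aᴴ.sum_norm_sq_col_le_l2_opNorm_sq i

variable [DecidableEq n] {A : Matrix n n ℂ}

theorem IsHermitian.l2_opNNNorm_le_of_spectrum_le (hA : A.IsHermitian) {c : NNReal}
    (hc : ∀ μ ∈ spectrum ℂ A, ‖μ‖₊ ≤ c) : ‖A‖₊ ≤ c := by
  rw [← ENNReal.coe_le_coe, ← hA.isSelfAdjoint.spectralRadius_eq_nnnorm]
  exact iSup₂_le fun μ hμ => ENNReal.coe_le_coe.mpr (hc μ hμ)

theorem IsHermitian.sum_norm_sq_row_le_of_spectrum_le (hA : A.IsHermitian) {c : NNReal}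
    (hc : ∀ μ ∈ spectrum ℂ A, ‖μ‖₊ ≤ c) (i : n) : ∑ j, ‖A i j‖ ^ 2 ≤ (c : ℝ) ^ 2 :=
  calc ∑ j, ‖A i j‖ ^ 2 ≤ ‖A‖ ^ 2 := A.sum_norm_sq_row_le_l2_opNorm_sq i
    _ ≤ (c : ℝ) ^ 2 := by gcongr; exact hA.l2_opNNNorm_le_of_spectrum_le hc

end Matrix

theorem IsCycloMat.nnnorm_le_two {n : ℕ} {A : Matrix (Fin n) (Fin n) ℂ} (hA : IsCycloMat A)
    {μ : ℂ} (hμ : μ ∈ spectrum ℂ A) : ‖μ‖₊ ≤ 2 := by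
  obtain ⟨t, rfl, ht₁, ht₂⟩ := hA μ hμ
  rw [← NNReal.coe_le_coe, coe_nnnorm, Complex.norm_real, Real.norm_eq_abs]
  exact abs_le.mpr ⟨ht₁, ht₂⟩

theorem cyclotomic_weighted_degree_bound_general
    (n : ℕ) (A : Matrix (Fin n) (Fin n) ℂ) (hA : A.IsHermitian)
    (hcyc : IsCycloMat A) :
    ∀ i, ∑ j, Complex.normSq (A i j) ≤ 4 := by
  intro i
  have h := hA.sum_norm_sq_row_le_of_spectrum_le (fun _ hμ => hcyc.nnnorm_le_two hμ) i
  norm_num at h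
  simpa only [Complex.normSq_eq_norm_sq] using h

/-- Every vertex of a cyclotomic `L`-graph has weighted degree at most 4: for a
cyclotomic `R`-matrix, each row has `∑ⱼ |A_{ij}|² ≤ 4`. -/
theorem cyclotomic_weighted_degree_bound
    (d : ℤ) (hd : d < 0) (hsf : Squarefree d) (hd1 : d ≠ -1) (hd3 : d ≠ -3)
    (n : ℕ) (A : Matrix (Fin n) (Fin n) ℂ) (hA : A.IsHermitian)
    (hent : ∀ i j, InIntRing d (A i j)) (hcyc : IsCycloMat A) :
    ∀ i, ∑ j, Complex.normSq (A i j) ≤ 4 :=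
  cyclotomic_weighted_degree_bound_general n A hA hcyc
end

section
/- Let d be a squarefree negative integer with d ≠ -1 and d ≠ -3. If A is an R-matrix over O_{ℚ(√d)} having a diagonal entry A_{ii} with |A_{ii}| ≥ 3, then M(A) > 1.3 (indeed M(A) ≥ (3 + √5)/2 = 2.618...). -/
/-! The diagonal entry `A i i` is a convex combination of the eigenvalues of `A`, with weights
`‖U i k‖²` coming from a unitary diagonalisation `A = U D U⋆`, so some eigenvalue `μ` satisfies
`|μ| ≥ |A i i| ≥ 3`. Writing `μ = z + z⁻¹` with `z` real and `|z| ≥ (3 + √5)/2` makes `z` a root of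
the associated reciprocal polynomial `zⁿ χ_A(z + z⁻¹)`, and one root of modulus at least
`(3 + √5)/2` already bounds the Mahler measure from below. -/

open Polynomial

namespace Matrix.IsHermitian
variable {𝕜 n : Type*} [RCLike 𝕜] [Fintype n] [DecidableEq n] {A : Matrix n n 𝕜}

theorem apply_self_eq_sum_eigenvalues (hA : A.IsHermitian) (i : n) :
    A i i =
      ∑ k, ((‖(hA.eigenvectorUnitary : Matrix n n 𝕜) i k‖ ^ 2 * hA.eigenvalues k : ℝ) : 𝕜) := by
  conv_lhs => rw [hA.spectral_theorem, Unitary.conjStarAlgAut_apply, mul_apply]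
  refine Finset.sum_congr rfl fun k _ => ?_
  rw [mul_diagonal, star_apply, RCLike.ofReal_mul, RCLike.ofReal_pow, ← RCLike.mul_conj]
  simp only [Function.comp_apply, RCLike.star_def]
  ring

theorem sum_norm_sq_eigenvectorUnitary (hA : A.IsHermitian) (i : n) :
    ∑ k, ‖(hA.eigenvectorUnitary : Matrix n n 𝕜) i k‖ ^ 2 = 1 := by
  have h := congrFun (congrFun (mem_unitaryGroup_iff.mp hA.eigenvectorUnitary.2) i) i
  rw [mul_apply, one_apply_eq] at h
  simp only [star_apply, RCLike.star_def, RCLike.mul_conj] at h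
  exact_mod_cast h

theorem exists_norm_apply_self_le_abs_eigenvalues (hA : A.IsHermitian) (i : n) :
    ∃ k, ‖A i i‖ ≤ |hA.eigenvalues k| := by
  obtain ⟨k, -, hk⟩ := Finset.exists_max_image Finset.univ (fun k => |hA.eigenvalues k|)
    ⟨i, Finset.mem_univ i⟩
  refine ⟨k, ?_⟩
  set U : Matrix n n 𝕜 := (hA.eigenvectorUnitary : Matrix n n 𝕜)
  calc ‖A i i‖ ≤ ∑ j, ‖U i j‖ ^ 2 * |hA.eigenvalues j| := by
        rw [hA.apply_self_eq_sum_eigenvalues i]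
        refine (norm_sum_le _ _).trans_eq (Finset.sum_congr rfl fun j _ => ?_)
        rw [RCLike.norm_ofReal, abs_mul, abs_of_nonneg (by positivity)]
    _ ≤ ∑ j, ‖U i j‖ ^ 2 * |hA.eigenvalues k| :=
        Finset.sum_le_sum fun j hj => mul_le_mul_of_nonneg_left (hk j hj) (by positivity)
    _ = |hA.eigenvalues k| := by rw [← Finset.sum_mul, sum_norm_sq_eigenvectorUnitary, one_mul]

theorem isRoot_charpoly_eigenvalues (hA : A.IsHermitian) (k : n) :
    A.charpoly.IsRoot (hA.eigenvalues k : 𝕜) := by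
  rw [IsRoot, hA.charpoly_eq, eval_prod]
  exact Finset.prod_eq_zero (Finset.mem_univ k) (by simp)

end Matrix.IsHermitian

theorem assocRecip_eval {n : ℕ} {g : ℂ[X]} (hg : g.natDegree ≤ n) {z : ℂ} (hz : z ≠ 0) :
    (assocRecip n g).eval z = z ^ n * g.eval (z + z⁻¹) := by
  rw [assocRecip, eval_finsetSum, eval_eq_sum_range' (Nat.lt_succ_of_le hg), Finset.mul_sum]
  have hz2 : z ^ 2 + 1 = z * (z + z⁻¹) := by field_simp
  refine Finset.sum_congr rfl fun k hk => ?_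
  obtain ⟨m, rfl⟩ := Nat.exists_eq_add_of_le (Nat.lt_succ_iff.mp (Finset.mem_range.mp hk))
  simp only [eval_mul, eval_C, eval_pow, eval_X, eval_add, eval_one, Nat.add_sub_cancel_left]
  rw [hz2, mul_pow]
  ring

theorem Complex.exists_add_inv_eq (w : ℂ) : ∃ z : ℂ, z ≠ 0 ∧ z + z⁻¹ = w := by
  obtain ⟨s, hs⟩ := IsAlgClosed.exists_pow_nat_eq (w ^ 2 - 4) two_pos
  have hws : (w + s) * (w - s) = 4 := by linear_combination -hs
  have hz : w + s ≠ 0 := fun h => by simp [h] at hws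
  refine ⟨(w + s) / 2, by simpa using hz, ?_⟩
  field_simp
  linear_combination hs

/-- Every `w : ℂ` is of the form `z + z⁻¹`, so `assocRecip n g = 0` would force `g` to vanish
on all of `ℂ`. -/
theorem assocRecip_ne_zero {n : ℕ} {g : ℂ[X]} (hg0 : g ≠ 0) (hg : g.natDegree ≤ n) :
    assocRecip n g ≠ 0 := by
  refine fun h => hg0 (Polynomial.funext fun w => ?_)
  obtain ⟨z, hz, rfl⟩ := Complex.exists_add_inv_eq w
  have := assocRecip_eval hg hz
  rw [h, eval_zero, eq_comm, mul_eq_zero_iff_left (pow_ne_zero n hz)] at this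
  rw [this, eval_zero]

theorem Real.exists_add_inv_eq_of_three_le_abs {μ : ℝ} (hμ : 3 ≤ |μ|) :
    ∃ z : ℝ, (3 + √5) / 2 ≤ |z| ∧ z + z⁻¹ = μ := by
  wlog hμ0 : 0 ≤ μ generalizing μ
  · obtain ⟨z, hz, hzμ⟩ := this (μ := -μ) (by rwa [abs_neg]) (by linarith)
    exact ⟨-z, by rwa [abs_neg], by rw [inv_neg, ← neg_add, hzμ, neg_neg]⟩
  rw [abs_of_nonneg hμ0] at hμ
  set s := √(μ ^ 2 - 4)
  have hs : s ^ 2 = μ ^ 2 - 4 := Real.sq_sqrt (by nlinarith)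
  have h5s : √5 ≤ s := Real.sqrt_le_sqrt (by nlinarith)
  have hz : (3 + √5) / 2 ≤ (μ + s) / 2 := by linarith
  refine ⟨(μ + s) / 2, hz.trans (le_abs_self _), ?_⟩
  have : μ + s ≠ 0 := by positivity
  field_simp
  linear_combination hs

theorem max_one_norm_le_mahlerMeasurePoly {P : ℂ[X]} (hP : P ≠ 0) {z : ℂ} (hz : P.IsRoot z) :
    max 1 ‖z‖ ≤ mahlerMeasurePoly P := by
  obtain ⟨t, ht⟩ := Multiset.exists_cons_of_mem ((mem_roots hP).mpr hz)
  rw [mahlerMeasurePoly, ht, Multiset.map_cons, Multiset.prod_cons]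
  exact le_mul_of_one_le_right (by positivity)
    (Multiset.one_le_prod_map fun _ _ => le_max_left _ _)

theorem large_diagonal_entry_mahler_bound_general
    (n : ℕ) (A : Matrix (Fin n) (Fin n) ℂ) (hA : A.IsHermitian)
    (i : Fin n) (hi : 3 ≤ ‖A i i‖) :
    1.3 < mahlerMat A ∧ (3 + Real.sqrt 5) / 2 ≤ mahlerMat A := by
  obtain ⟨k, hk⟩ := hA.exists_norm_apply_self_le_abs_eigenvalues i
  obtain ⟨z, hz, hzμ⟩ := Real.exists_add_inv_eq_of_three_le_abs (hi.trans hk)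
  have hz0 : (z : ℂ) ≠ 0 :=
    Complex.ofReal_ne_zero.mpr (abs_pos.mp (lt_of_lt_of_le (by positivity) hz))
  have hdeg : A.charpoly.natDegree ≤ n :=
    (A.charpoly_natDegree_eq_dim.trans (Fintype.card_fin n)).le
  have hroot : (assocRecip n A.charpoly).IsRoot z := by
    rw [IsRoot, assocRecip_eval hdeg hz0, ← Complex.ofReal_inv, ← Complex.ofReal_add, hzμ]
    exact mul_eq_zero_of_right _ (hA.isRoot_charpoly_eigenvalues k)
  have hM :=
    max_one_norm_le_mahlerMeasurePoly (assocRecip_ne_zero A.charpoly_monic.ne_zero hdeg) hroot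
  rw [Complex.norm_real, Real.norm_eq_abs] at hM
  have hlarge : (3 + √5) / 2 ≤ mahlerMat A := hz.trans ((le_max_right _ _).trans hM)
  have h5 : 2 ≤ √5 := Real.le_sqrt_of_sq_le (by norm_num)
  exact ⟨by linarith, hlarge⟩

/-- An `R`-matrix with a diagonal entry of modulus at least 3 has Mahler measure
greater than 1.3; indeed at least `(3 + √5)/2 = 2.618...`. -/
theorem large_diagonal_entry_mahler_bound
    (d : ℤ) (hd : d < 0) (hsf : Squarefree d) (hd1 : d ≠ -1) (hd3 : d ≠ -3)
    (n : ℕ) (A : Matrix (Fin n) (Fin n) ℂ) (hA : A.IsHermitian)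
    (hent : ∀ i j, InIntRing d (A i j))
    (i : Fin n) (hi : 3 ≤ ‖A i i‖) :
    1.3 < mahlerMat A ∧ (3 + Real.sqrt 5) / 2 ≤ mahlerMat A :=
  large_diagonal_entry_mahler_bound_general n A hA i hi
end

section
/- Let d = -2 or d = -7. If A is a minimal noncyclotomic L'-matrix over O_{ℚ(√d)} with at least seven rows, then for every index i one has Σ_j |A_{ij}|² ≤ 4 (sum over all indices j, including j = i); in graph language, every vertex of such a graph has weighted degree at most 4. -/
/-!
Deleting a vertex `j ≠ i` leaves a cyclotomic Hermitian matrix `B`. Its `L²` operator norm equals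
its spectral radius, at most `2`, so every row of `B` has squared length at most `‖B‖² ≤ 4`: the
weight of row `i` of `A` without the entry at `j` is at most `4`. If some off-diagonal entry
`A i j` vanishes, this is the claim. Otherwise the `n - 1 ≥ 6` off-diagonal entries of row `i` are
nonzero algebraic integers, whose norms are positive integers, and deleting one of them still
leaves weight at least `5`.
-/

open Polynomial

section L2OpNorm

open scoped Matrix Matrix.Norms.L2Operator

lemma Matrix.sum_norm_sq_row_le_l2_opNorm_sq_s13 {𝕜 : Type*} [RCLike 𝕜] {m n : Type*} [Fintype m]
    [Fintype n] [DecidableEq m] [DecidableEq n] (A : Matrix m n 𝕜) (i : m) :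
    ∑ j, ‖A i j‖ ^ 2 ≤ ‖A‖ ^ 2 := by
  have h := Aᴴ.l2_opNorm_mulVec (EuclideanSpace.single i 1)
  rw [Matrix.l2_opNorm_conjTranspose, PiLp.norm_single, norm_one, mul_one] at h
  have h2 := pow_le_pow_left₀ (norm_nonneg _) h 2
  rw [EuclideanSpace.norm_sq_eq] at h2
  simpa [Matrix.mulVec_single] using h2

lemma IsCycloMat.l2_opNorm_le_two {n : ℕ} {B : Matrix (Fin n) (Fin n) ℂ} (hB : B.IsHermitian)
    (hc : IsCycloMat B) : ‖B‖ ≤ 2 := by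
  have h : spectralRadius ℂ B ≤ 2 := by
    refine iSup₂_le fun μ hμ => ?_
    obtain ⟨t, rfl, ht₁, ht₂⟩ := hc μ hμ
    have : ‖(t : ℂ)‖₊ ≤ 2 := by
      rw [← NNReal.coe_le_coe, coe_nnnorm, Complex.norm_real, Real.norm_eq_abs]
      exact abs_le.2 ⟨ht₁, ht₂⟩
    exact_mod_cast this
  rw [hB.isSelfAdjoint.spectralRadius_eq_nnnorm] at h
  exact_mod_cast h

end L2OpNorm

lemma normSq_intCast_add_mul_quadOmega {d : ℤ} (hd : d ≤ 0) (a b : ℤ) :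
    Complex.normSq ((a : ℂ) + (b : ℂ) * quadOmega d) =
      ((if d % 4 = 1 then a ^ 2 + a * b - d / 4 * b ^ 2 else a ^ 2 - d * b ^ 2 : ℤ) : ℝ) := by
  have hs : Real.sqrt (-d : ℝ) ^ 2 = -d := Real.sq_sqrt (by exact_mod_cast neg_nonneg.2 hd)
  unfold quadOmega
  split_ifs with h
  · have hq : (d : ℝ) = 4 * ((d / 4 : ℤ) : ℝ) + 1 := by
      exact_mod_cast (by omega : d = 4 * (d / 4) + 1)
    have hx : (a : ℂ) + b * ((1 + Complex.I * Real.sqrt (-d : ℝ)) / 2) =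
        ((a + b / 2 : ℝ) : ℂ) + ((b * Real.sqrt (-d : ℝ) / 2 : ℝ) : ℂ) * Complex.I := by
      push_cast; ring
    rw [hx, Complex.normSq_add_mul_I]
    push_cast
    linear_combination (b : ℝ) ^ 2 / 4 * hs - (b : ℝ) ^ 2 / 4 * hq
  · have hx : (a : ℂ) + b * (Complex.I * Real.sqrt (-d : ℝ)) =
        ((a : ℝ) : ℂ) + ((b * Real.sqrt (-d : ℝ) : ℝ) : ℂ) * Complex.I := by
      push_cast; ring
    rw [hx, Complex.normSq_add_mul_I]
    push_cast
    linear_combination (b : ℝ) ^ 2 * hs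

lemma InIntRing.one_le_normSq {d : ℤ} (hd : d ≤ 0) {x : ℂ} (hx : InIntRing d x) (hx0 : x ≠ 0) :
    1 ≤ Complex.normSq x := by
  obtain ⟨a, b, rfl⟩ := hx
  have hpos := Complex.normSq_pos.2 hx0
  rw [normSq_intCast_add_mul_quadOmega hd] at hpos ⊢
  exact_mod_cast Int.cast_pos.1 hpos

open scoped Matrix.Norms.L2Operator in
lemma IsCycloMat.sum_normSq_row_le_four {n : ℕ} {B : Matrix (Fin n) (Fin n) ℂ}
    (hB : B.IsHermitian) (hc : IsCycloMat B) (i : Fin n) : ∑ j, Complex.normSq (B i j) ≤ 4 := by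
  simp_rw [Complex.normSq_eq_norm_sq]
  calc ∑ j, ‖B i j‖ ^ 2 ≤ ‖B‖ ^ 2 := B.sum_norm_sq_row_le_l2_opNorm_sq_s13 i
    _ ≤ 2 ^ 2 := pow_le_pow_left₀ (norm_nonneg B) (hc.l2_opNorm_le_two hB) 2
    _ = 4 := by norm_num

lemma sum_erase_normSq_row_le_four {n : ℕ} {A : Matrix (Fin n) (Fin n) ℂ} (hA : A.IsHermitian)
    (hsub : ∀ m < n, ∀ e : Fin m ↪ Fin n, IsCycloMat (A.submatrix e e)) {i j : Fin n}
    (hji : j ≠ i) : ∑ k ∈ Finset.univ.erase j, Complex.normSq (A i k) ≤ 4 := by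
  obtain ⟨m, rfl⟩ := Nat.exists_eq_add_one_of_ne_zero i.pos.ne'
  obtain ⟨i', rfl⟩ := Fin.exists_succAbove_eq hji.symm
  have hrow := (hsub m m.lt_succ_self j.succAboveEmb).sum_normSq_row_le_four
    (hA.submatrix _) i'
  have hsplit := Fin.sum_univ_succAbove (fun k => Complex.normSq (A (j.succAbove i') k)) j
  rw [← Finset.add_sum_erase _ _ (Finset.mem_univ j), add_left_cancel_iff] at hsplit
  simpa [hsplit] using hrow

lemma card_sub_two_le_sum_erase {ι : Type*} [Fintype ι] [DecidableEq ι] (f : ι → ℝ)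
    (hf : ∀ k, 0 ≤ f k) {i j : ι} (hji : j ≠ i) (hone : ∀ k ≠ i, 1 ≤ f k) :
    ((Fintype.card ι - 2 : ℕ) : ℝ) ≤ ∑ k ∈ Finset.univ.erase j, f k := by
  have hcard : ((Finset.univ.erase j).erase i).card = Fintype.card ι - 2 := by
    rw [Finset.card_erase_of_mem (Finset.mem_erase.2 ⟨hji.symm, Finset.mem_univ i⟩),
      Finset.card_erase_of_mem (Finset.mem_univ j), Finset.card_univ]
    omega
  calc ((Fintype.card ι - 2 : ℕ) : ℝ) = ∑ k ∈ (Finset.univ.erase j).erase i, (1 : ℝ) := by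
        simp [hcard]
    _ ≤ ∑ k ∈ (Finset.univ.erase j).erase i, f k :=
        Finset.sum_le_sum fun k hk => hone k (Finset.ne_of_mem_erase hk)
    _ ≤ ∑ k ∈ Finset.univ.erase j, f k :=
        Finset.sum_le_sum_of_subset_of_nonneg (Finset.erase_subset _ _) fun k _ _ => hf k

/-- A minimal noncyclotomic `L'`-matrix with at least seven rows has all rows of
weighted degree at most 4. -/
theorem minimal_noncyclotomic_weighted_degree_bound
    (d : ℤ) (hd : d = -2 ∨ d = -7)
    (n : ℕ) (hn : 7 ≤ n) (A : Matrix (Fin n) (Fin n) ℂ)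
    (hLp : IsLpMat d A) (hmin : MinimalNoncyclotomic A) :
    ∀ i, ∑ j, Complex.normSq (A i j) ≤ 4 := by
  intro i
  obtain ⟨hA, hint, -, -⟩ := hLp
  have hdel : ∀ j ≠ i, ∑ k ∈ Finset.univ.erase j, Complex.normSq (A i k) ≤ 4 :=
    fun j hji => sum_erase_normSq_row_le_four hA hmin.2.2 hji
  obtain ⟨j, hji, hzero⟩ : ∃ j ≠ i, A i j = 0 := by
    by_contra! hne
    obtain ⟨j, hji⟩ : ∃ j, j ≠ i := Fintype.exists_ne_of_one_lt_card (by rw [Fintype.card_fin]; omega) i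
    have hlow := card_sub_two_le_sum_erase _ (fun k => Complex.normSq_nonneg (A i k)) hji
      fun k hk => (hint i k).one_le_normSq (by omega) (hne k hk)
    rw [Fintype.card_fin] at hlow
    have : (5 : ℝ) ≤ ((n - 2 : ℕ) : ℝ) := by exact_mod_cast (by omega : 5 ≤ n - 2)
    linarith [hdel j hji]
  rw [← Finset.add_sum_erase _ _ (Finset.mem_univ j), hzero, map_zero, zero_add]
  exact hdel j hji
end
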